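/- The series ∑_{n≥0} q^{2n} (q^{2n+2};q²)_∞² / (q^{2n+1};q²)_∞² equals ∑_{n≥0} q^n / (1 - q^{2n+1}) as formal power series in q, and in particular all its coefficients are strictly positive. -/

import Mathlib

open Finset PowerSeries

/-- `(q^a; q^2)_n = ∏_{j<n} (1 - q^(a+2j))` as a formal power series in `q`. -/
noncomputable def P2 (a n : ℕ) : PowerSeries ℚ :=
  ∏ j ∈ Finset.range n, (1 - (PowerSeries.X : PowerSeries ℚ) ^ (a + 2 * j))

/-- `(q^a; q^2)_∞ = ∏_{j≥0} (1 - q^(a+2j))` (for `a ≥ 1`) as a formal power series. -/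
noncomputable def P2inf (a : ℕ) : PowerSeries ℚ :=
  PowerSeries.mk fun m => PowerSeries.coeff m (P2 a (m + 1))

/-- The series `∑_{n≥0} q^{2n} (q^{2n+2};q²)_∞² / (q^{2n+1};q²)_∞²`, defined
coefficientwise (the `n`-th term has order at least `2n`). -/
noncomputable def F11 : PowerSeries ℚ :=
  PowerSeries.mk fun m => ∑ n ∈ Finset.range (m + 1),
    PowerSeries.coeff m
      ((PowerSeries.X : PowerSeries ℚ) ^ (2 * n) * P2inf (2 * n + 2) ^ 2 *
        (P2inf (2 * n + 1) ^ 2)⁻¹)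

/-!
Write `ψ = (q²;q²)_∞ / (q;q²)_∞` and `c_n = (q;q²)_n / (q²;q²)_n`. By the q-binomial theorem in
base `q²`, `G_a := ∑ c_n q^{an} = (q^{a+1};q²)_∞ / (q^a;q²)_∞`, while
`(q^{2n+2};q²)_∞ / (q^{2n+1};q²)_∞ = ψ c_n`. Hence the `n`-th summand is `ψ c_n q^{2n} G_{2n+1}`, a
double sum `ψ ∑_{n,k} c_n c_k q^{2n + (2n+1)k}`. Exchanging the two sums turns it into
`ψ ∑_k c_k q^k G_{2k+2}`, and
`ψ c_k G_{2k+2} = (q^{2k+3};q²)_∞ / (q^{2k+1};q²)_∞ = 1/(1 - q^{2k+1})`.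
Every `q^k / (1 - q^{2k+1})` has nonnegative coefficients, and the one with `k = m` contributes
`1` to the coefficient of `q^m`.

For the q-binomial identity, both `G(z) = ∑ c_n zⁿ` and `(qz;q²)_∞ / (z;q²)_∞` satisfy
`(1 - z) G(z) = (1 - qz) G(q²z)` and are `1` modulo `z`. At `z = q^a`, iterating the equation shows
that their difference is divisible by every power of `q`.
-/

section XAdic

variable {R : Type*} [CommRing R]

theorem PowerSeries.eq_zero_of_forall_X_pow_dvd {f : R⟦X⟧} (h : ∀ N, X ^ N ∣ f) : f = 0 := by
  ext m
  simpa using X_pow_dvd_iff.mp (h (m + 1)) m (Nat.lt_succ_self m)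

theorem PowerSeries.eq_zero_of_succ_dvd_of_X_pow_dvd {E : ℕ → R⟦X⟧} (hE : ∀ k, E (k + 1) ∣ E k)
    (hX : ∀ k, X ^ k ∣ E k) : E 0 = 0 := by
  have hE0 : ∀ N, E N ∣ E 0 := by
    intro N
    induction N with
    | zero => rfl
    | succ N ih => exact (hE N).trans ih
  exact eq_zero_of_forall_X_pow_dvd fun N => (hX N).trans (hE0 N)

theorem PowerSeries.constantCoeff_eq_one_of_X_dvd_sub_one {f : R⟦X⟧} (h : X ∣ f - 1) :
    constantCoeff f = 1 := by
  rwa [X_dvd_iff, map_sub, map_one, sub_eq_zero] at h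

theorem PowerSeries.X_pow_dvd_X_pow_mul {n c : ℕ} (h : n ≤ c) (g : R⟦X⟧) : X ^ n ∣ X ^ c * g :=
  (pow_dvd_pow X h).trans (dvd_mul_right _ _)

theorem PowerSeries.X_pow_dvd_sub_of_le {f : ℕ → R⟦X⟧}
    (hf : ∀ N, X ^ (N + 1) ∣ f (N + 1) - f N) {N N' : ℕ} (h : N ≤ N') :
    X ^ (N + 1) ∣ f N' - f N := by
  induction N', h using Nat.le_induction with
  | base => simp
  | succ N' hN ih =>
    rw [← sub_add_sub_cancel _ (f N')]
    exact dvd_add ((pow_dvd_pow X (by omega)).trans (hf N')) ih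

theorem PowerSeries.X_pow_dvd_mk_coeff_sub {f : ℕ → R⟦X⟧}
    (hf : ∀ N, X ^ (N + 1) ∣ f (N + 1) - f N) (N : ℕ) :
    X ^ (N + 1) ∣ mk (fun m => coeff m (f (m + 1))) - f N := by
  refine X_pow_dvd_iff.mpr fun m hm => ?_
  have hclose : X ^ (m + 1) ∣ f (m + 1) - f N := by
    rw [← sub_sub_sub_cancel_right _ _ (f m)]
    exact dvd_sub (hf m) (X_pow_dvd_sub_of_le hf (by omega))
  rw [map_sub, coeff_mk, ← map_sub]
  exact X_pow_dvd_iff.mp hclose m (by omega)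

end XAdic

section CoeffSum

variable {R : Type*} [CommRing R]

/-- The sum `∑ₙ f n` computed coefficientwise; it is the `X`-adic sum when `X ^ n ∣ f n`. -/
noncomputable def coeffSum (f : ℕ → R⟦X⟧) : R⟦X⟧ :=
  mk fun m => ∑ n ∈ range (m + 1), coeff m (f n)

theorem coeff_coeffSum (f : ℕ → R⟦X⟧) (m : ℕ) :
    coeff m (coeffSum f) = ∑ n ∈ range (m + 1), coeff m (f n) :=
  coeff_mk _ _

theorem coeff_coeffSum_of_lt {f : ℕ → R⟦X⟧} (hf : ∀ n, X ^ n ∣ f n) {m N : ℕ} (h : m < N) :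
    coeff m (coeffSum f) = ∑ n ∈ range N, coeff m (f n) := by
  rw [coeff_coeffSum]
  refine sum_subset (range_subset_range.2 h) fun n _ hn => ?_
  exact X_pow_dvd_iff.mp (hf n) m (by simp at hn; omega)

theorem coeffSum_sub (f g : ℕ → R⟦X⟧) :
    coeffSum (fun n => f n - g n) = coeffSum f - coeffSum g := by
  ext m
  simp [coeff_coeffSum, sum_sub_distrib]

theorem coeffSum_sub_succ {u : ℕ → R⟦X⟧} (hu : ∀ n, X ^ n ∣ u n) :
    coeffSum (fun n => u n - u (n + 1)) = u 0 := by
  ext m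
  simp only [coeff_coeffSum, map_sub]
  rw [sum_range_sub', X_pow_dvd_iff.mp (hu (m + 1)) m (by omega), sub_zero]

theorem mul_coeffSum (C : R⟦X⟧) {f : ℕ → R⟦X⟧} (hf : ∀ n, X ^ n ∣ f n) :
    C * coeffSum f = coeffSum fun n => C * f n := by
  ext m
  simp only [coeff_coeffSum, coeff_mul]
  rw [sum_comm]
  refine sum_congr rfl fun p hp => ?_
  have hp₂ : p.2 < m + 1 := by rw [HasAntidiagonal.mem_antidiagonal] at hp; omega
  rw [← coeff_coeffSum, coeff_coeffSum_of_lt hf hp₂, mul_sum]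

theorem coeffSum_comm (H : ℕ → ℕ → R⟦X⟧) :
    coeffSum (fun n => coeffSum (H n)) = coeffSum fun k => coeffSum fun n => H n k := by
  ext m
  simp only [coeff_coeffSum]
  exact sum_comm

end CoeffSum

section QProducts

variable {a : ℕ}

theorem P2_succ (a n : ℕ) : P2 a (n + 1) = P2 a n * (1 - X ^ (a + 2 * n)) :=
  prod_range_succ _ _

theorem P2_succ' (a n : ℕ) : P2 a (n + 1) = (1 - X ^ a) * P2 (a + 2) n := by
  rw [P2, prod_range_succ', P2, mul_comm, mul_zero, add_zero]
  congr 1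
  exact prod_congr rfl fun j _ => by ring

theorem X_pow_dvd_P2_sub_one (a n : ℕ) : X ^ a ∣ P2 a n - 1 := by
  induction n with
  | zero => simp [P2]
  | succ n ih =>
    rw [P2_succ, show P2 a n * (1 - X ^ (a + 2 * n)) - 1
      = (P2 a n - 1) * (1 - X ^ (a + 2 * n)) - X ^ (a + 2 * n) by ring]
    exact dvd_sub (dvd_mul_of_dvd_left ih _) (pow_dvd_pow X (by omega))

theorem X_pow_dvd_P2_succ_sub (ha : 1 ≤ a) (N : ℕ) : X ^ (N + 1) ∣ P2 a (N + 1) - P2 a N := by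
  rw [P2_succ]
  exact (pow_dvd_pow X (by omega : N + 1 ≤ a + 2 * N)).trans ⟨-P2 a N, by ring⟩

theorem X_pow_dvd_P2inf_sub_P2 (ha : 1 ≤ a) (N : ℕ) : X ^ (N + 1) ∣ P2inf a - P2 a N :=
  X_pow_dvd_mk_coeff_sub (X_pow_dvd_P2_succ_sub ha) N

theorem X_pow_dvd_P2inf_sub_one (ha : 1 ≤ a) : X ^ a ∣ P2inf a - 1 := by
  obtain ⟨N, rfl⟩ := Nat.exists_eq_add_of_le' ha
  rw [← sub_add_sub_cancel _ (P2 (N + 1) N)]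
  exact dvd_add (X_pow_dvd_P2inf_sub_P2 ha N) (X_pow_dvd_P2_sub_one _ N)

theorem constantCoeff_P2 (ha : 1 ≤ a) (n : ℕ) : constantCoeff (P2 a n) = 1 :=
  constantCoeff_eq_one_of_X_dvd_sub_one
    ((dvd_pow_self X (by omega)).trans (X_pow_dvd_P2_sub_one a n))

theorem constantCoeff_P2inf (ha : 1 ≤ a) : constantCoeff (P2inf a) = 1 :=
  constantCoeff_eq_one_of_X_dvd_sub_one
    ((dvd_pow_self X (by omega)).trans (X_pow_dvd_P2inf_sub_one ha))

theorem P2_ne_zero (ha : 1 ≤ a) (n : ℕ) : P2 a n ≠ 0 := fun h => by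
  simpa [h] using constantCoeff_P2 ha n

theorem P2inf_ne_zero (ha : 1 ≤ a) : P2inf a ≠ 0 := fun h => by
  simpa [h] using constantCoeff_P2inf ha

theorem P2inf_eq_one_sub_X_pow_mul (ha : 1 ≤ a) : P2inf a = (1 - X ^ a) * P2inf (a + 2) := by
  refine sub_eq_zero.mp (eq_zero_of_forall_X_pow_dvd fun N => (pow_dvd_pow X N.le_succ).trans ?_)
  rw [show P2inf a - (1 - X ^ a) * P2inf (a + 2)
      = (P2inf a - P2 a (N + 1)) - (1 - X ^ a) * (P2inf (a + 2) - P2 (a + 2) N) by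
    rw [P2_succ']; ring]
  exact dvd_sub ((pow_dvd_pow X (N + 1).le_succ).trans (X_pow_dvd_P2inf_sub_P2 ha _))
    (dvd_mul_of_dvd_right (X_pow_dvd_P2inf_sub_P2 (by omega) N) _)

theorem P2inf_eq_P2_mul (ha : 1 ≤ a) (n : ℕ) : P2inf a = P2 a n * P2inf (a + 2 * n) := by
  induction n with
  | zero => simp [P2]
  | succ n ih =>
    rw [ih, P2inf_eq_one_sub_X_pow_mul (by omega), P2_succ, mul_add, mul_one, add_assoc]
    ring

end QProducts

section QBinomial

noncomputable def binomTerm (n : ℕ) : ℚ⟦X⟧ := P2 1 n * (P2 2 n)⁻¹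

/-- The q-binomial series `∑ₙ (q;q²)_n / (q²;q²)_n zⁿ` at `z = q^a`. -/
noncomputable def binomSeries (a : ℕ) : ℚ⟦X⟧ := coeffSum fun n => X ^ (a * n) * binomTerm n

theorem binomTerm_zero : binomTerm 0 = 1 := by
  simp [binomTerm, P2]

theorem binomTerm_mul_P2 (n : ℕ) : binomTerm n * P2 2 n = P2 1 n := by
  rw [binomTerm, mul_assoc, PowerSeries.inv_mul_cancel _ (by simp [constantCoeff_P2]), mul_one]

theorem binomTerm_succ_mul (n : ℕ) :
    binomTerm (n + 1) * (1 - X ^ (2 * n + 2)) = binomTerm n * (1 - X ^ (2 * n + 1)) := by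
  refine mul_right_cancel₀ (P2_ne_zero (a := 2) (by omega) n) ?_
  have hsucc := binomTerm_mul_P2 (n + 1)
  rw [P2_succ, P2_succ] at hsucc
  linear_combination hsucc - (1 - X ^ (2 * n + 1)) * binomTerm_mul_P2 n

theorem X_pow_dvd_binomSeries_sub_one (a : ℕ) : X ^ a ∣ binomSeries a - 1 := by
  refine X_pow_dvd_iff.mpr fun m hm => ?_
  rw [map_sub, binomSeries, coeff_coeffSum, sum_eq_single 0, mul_zero, pow_zero, one_mul,
    binomTerm_zero, sub_self]
  · intro n _ hn
    rw [coeff_X_pow_mul', if_neg (by nlinarith [Nat.one_le_iff_ne_zero.mpr hn])]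
  · simp

theorem one_sub_X_pow_mul_binomSeries {a : ℕ} (ha : 1 ≤ a) :
    (1 - X ^ a) * binomSeries a = (1 - X ^ (a + 1)) * binomSeries (a + 2) := by
  set u : ℕ → ℚ⟦X⟧ := fun n => X ^ (a * n) * ((1 - X ^ (2 * n)) * binomTerm n) with hu_def
  have hu : ∀ n, X ^ n ∣ u n := fun n => X_pow_dvd_X_pow_mul (by nlinarith) _
  have hterm : ∀ n, (1 - X ^ a) * (X ^ (a * n) * binomTerm n)
      - (1 - X ^ (a + 1)) * (X ^ ((a + 2) * n) * binomTerm n) = u n - u (n + 1) := fun n => by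
    linear_combination X ^ (a * n + a) * binomTerm_succ_mul n
  rw [← sub_eq_zero]
  calc (1 - X ^ a) * binomSeries a - (1 - X ^ (a + 1)) * binomSeries (a + 2)
      = coeffSum fun n => u n - u (n + 1) := by
        rw [binomSeries, binomSeries, mul_coeffSum _ fun n => X_pow_dvd_X_pow_mul (by nlinarith) _,
          mul_coeffSum _ fun n => X_pow_dvd_X_pow_mul (by nlinarith) _, ← coeffSum_sub]
        exact congrArg coeffSum (funext hterm)
    _ = 0 := by rw [coeffSum_sub_succ hu]; simp [hu_def]

theorem P2inf_succ_eq_mul_binomSeries {a : ℕ} (ha : 1 ≤ a) :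
    P2inf (a + 1) = P2inf a * binomSeries a := by
  set D : ℕ → ℚ⟦X⟧ := fun b => P2inf (b + 1) - P2inf b * binomSeries b with hD
  have hstep : ∀ b, 1 ≤ b → D b = (1 - X ^ (b + 1)) * D (b + 2) := by
    intro b hb
    have h₁ := P2inf_eq_one_sub_X_pow_mul (a := b + 1) (by omega)
    rw [show b + 1 + 2 = b + 2 + 1 by omega] at h₁
    simp only [hD]
    rw [h₁, P2inf_eq_one_sub_X_pow_mul hb]
    linear_combination -P2inf (b + 2) * one_sub_X_pow_mul_binomSeries hb
  have hdvd : ∀ b, 1 ≤ b → X ^ b ∣ D b := by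
    intro b hb
    rw [show D b = (P2inf (b + 1) - 1) - (P2inf b - 1) * binomSeries b - (binomSeries b - 1) by
      simp only [hD]; ring]
    exact dvd_sub (dvd_sub ((pow_dvd_pow X b.le_succ).trans (X_pow_dvd_P2inf_sub_one (by omega)))
      (dvd_mul_of_dvd_left (X_pow_dvd_P2inf_sub_one hb) _)) (X_pow_dvd_binomSeries_sub_one b)
  have hD0 : D (a + 2 * 0) = 0 := by
    refine eq_zero_of_succ_dvd_of_X_pow_dvd (E := fun k => D (a + 2 * k)) (fun k => ?_)
      fun k => (pow_dvd_pow X (by omega)).trans (hdvd _ (by omega))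
    rw [hstep (a + 2 * k) (by omega), show a + 2 * (k + 1) = a + 2 * k + 2 by ring]
    exact dvd_mul_left _ _
  exact sub_eq_zero.mp hD0

end QBinomial

noncomputable def ramanujanPsi : ℚ⟦X⟧ := P2inf 2 * (P2inf 1)⁻¹

theorem ramanujanPsi_mul_P2inf_one : ramanujanPsi * P2inf 1 = P2inf 2 := by
  rw [ramanujanPsi, mul_assoc, PowerSeries.inv_mul_cancel _ (by simp [constantCoeff_P2inf]),
    mul_one]

theorem ramanujanPsi_mul_binomTerm_mul (k : ℕ) :
    ramanujanPsi * binomTerm k * P2inf (2 * k + 1) = P2inf (2 * k + 2) := by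
  refine mul_left_cancel₀ (P2_ne_zero (a := 2) (by omega) k) ?_
  have h₁ := P2inf_eq_P2_mul (a := 1) le_rfl k
  have h₂ := P2inf_eq_P2_mul (a := 2) (by omega) k
  rw [show 1 + 2 * k = 2 * k + 1 by ring] at h₁
  rw [show 2 + 2 * k = 2 * k + 2 by ring] at h₂
  linear_combination ramanujanPsi * P2inf (2 * k + 1) * binomTerm_mul_P2 k
    - ramanujanPsi * h₁ + ramanujanPsi_mul_P2inf_one + h₂

theorem summand_eq (n : ℕ) :
    X ^ (2 * n) * P2inf (2 * n + 2) ^ 2 * (P2inf (2 * n + 1) ^ 2)⁻¹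
      = ramanujanPsi * (X ^ (2 * n) * binomTerm n * binomSeries (2 * n + 1)) := by
  refine ((eq_mul_inv_iff_mul_eq (by simp [constantCoeff_P2inf])).mpr ?_).symm
  have hbinom := P2inf_succ_eq_mul_binomSeries (a := 2 * n + 1) (by omega)
  linear_combination X ^ (2 * n) * (P2inf (2 * n + 1) * binomSeries (2 * n + 1))
    * ramanujanPsi_mul_binomTerm_mul n - X ^ (2 * n) * P2inf (2 * n + 2) * hbinom

theorem ramanujanPsi_mul_eq_inv (k : ℕ) :
    ramanujanPsi * (X ^ k * binomTerm k * binomSeries (2 * k + 2))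
      = X ^ k * (1 - X ^ (2 * k + 1))⁻¹ := by
  refine (eq_mul_inv_iff_mul_eq (by simp)).mpr ?_
  refine mul_right_cancel₀ (P2inf_ne_zero (a := 2 * k + 3) (by omega)) ?_
  have h₁ := P2inf_eq_one_sub_X_pow_mul (a := 2 * k + 1) (by omega)
  have h₂ := P2inf_succ_eq_mul_binomSeries (a := 2 * k + 2) (by omega)
  rw [show 2 * k + 1 + 2 = 2 * k + 3 by ring] at h₁
  linear_combination -X ^ k * binomSeries (2 * k + 2) * ramanujanPsi * binomTerm k * h₁
    + X ^ k * binomSeries (2 * k + 2) * ramanujanPsi_mul_binomTerm_mul k - X ^ k * h₂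

theorem F11_eq_coeffSum : F11 = coeffSum fun k => X ^ k * (1 - X ^ (2 * k + 1))⁻¹ := by
  have hterm : ∀ a, 1 ≤ a → ∀ n, X ^ n ∣ X ^ (a * n) * binomTerm n :=
    fun a ha n => X_pow_dvd_X_pow_mul (by nlinarith) _
  calc F11
      = coeffSum fun n => ramanujanPsi * (X ^ (2 * n) * binomTerm n * binomSeries (2 * n + 1)) :=
        congrArg coeffSum (funext summand_eq)
    _ = ramanujanPsi * coeffSum fun n => X ^ (2 * n) * binomTerm n * binomSeries (2 * n + 1) :=
        (mul_coeffSum _ fun n => dvd_mul_of_dvd_left (X_pow_dvd_X_pow_mul (by omega) _) _).symm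
    _ = ramanujanPsi * coeffSum fun n => coeffSum fun k =>
          X ^ (2 * n) * binomTerm n * (X ^ ((2 * n + 1) * k) * binomTerm k) := by
        congr 1
        exact congrArg coeffSum (funext fun n => mul_coeffSum _ (hterm _ (by omega)))
    _ = ramanujanPsi * coeffSum fun k => coeffSum fun n =>
          X ^ (2 * n) * binomTerm n * (X ^ ((2 * n + 1) * k) * binomTerm k) := by
        rw [coeffSum_comm]
    _ = ramanujanPsi * coeffSum fun k => X ^ k * binomTerm k * binomSeries (2 * k + 2) := by
        congr 1
        refine congrArg coeffSum (funext fun k => ?_)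
        rw [binomSeries, mul_coeffSum _ (hterm _ (by omega))]
        exact congrArg coeffSum (funext fun n => by ring)
    _ = coeffSum fun k => ramanujanPsi * (X ^ k * binomTerm k * binomSeries (2 * k + 2)) :=
        mul_coeffSum _ fun k => dvd_mul_of_dvd_left (X_pow_dvd_X_pow_mul le_rfl _) _
    _ = coeffSum fun k => X ^ k * (1 - X ^ (2 * k + 1))⁻¹ :=
        congrArg coeffSum (funext ramanujanPsi_mul_eq_inv)

theorem inv_one_sub_X_pow_eq_coeffSum {k : Type*} [Field k] {b : ℕ} (hb : 1 ≤ b) :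
    (1 - X ^ b : k⟦X⟧)⁻¹ = coeffSum fun j => X ^ (b * j) := by
  have hdvd : ∀ j, X ^ j ∣ (X ^ (b * j) : k⟦X⟧) := fun j => pow_dvd_pow X (by nlinarith)
  refine ((eq_inv_iff_mul_eq_one (by simp [zero_pow (by omega : b ≠ 0)])).mpr ?_).symm
  calc (coeffSum fun j => (X ^ (b * j) : k⟦X⟧)) * (1 - X ^ b)
      = coeffSum fun j => X ^ (b * j) - X ^ (b * (j + 1)) := by
        rw [mul_comm, mul_coeffSum _ hdvd]
        exact congrArg coeffSum (funext fun j => by ring)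
    _ = 1 := by rw [coeffSum_sub_succ hdvd, mul_zero, pow_zero]

theorem coeff_X_pow_mul_inv_one_sub_X_pow_nonneg {k : Type*} [Field k] [LinearOrder k]
    [IsStrictOrderedRing k] {b : ℕ} (hb : 1 ≤ b) (n m : ℕ) :
    0 ≤ coeff m (X ^ n * (1 - X ^ b : k⟦X⟧)⁻¹) := by
  rw [coeff_X_pow_mul', inv_one_sub_X_pow_eq_coeffSum hb, coeff_coeffSum]
  split_ifs
  · exact sum_nonneg fun j _ => by rw [coeff_X_pow]; split_ifs <;> norm_num
  · rfl

/-- `∑_{n≥0} q^{2n} (q^{2n+2};q²)_∞² / (q^{2n+1};q²)_∞² = ∑_{n≥0} q^n/(1-q^{2n+1})`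
as formal power series, and all its coefficients are strictly positive. -/
theorem stmt_8 :
    (F11 = PowerSeries.mk fun m => ∑ n ∈ Finset.range (m + 1),
        PowerSeries.coeff m
          ((PowerSeries.X : PowerSeries ℚ) ^ n *
            (1 - (PowerSeries.X : PowerSeries ℚ) ^ (2 * n + 1))⁻¹)) ∧
      ∀ m : ℕ, 0 < PowerSeries.coeff m F11 := by
  refine ⟨F11_eq_coeffSum, fun m => ?_⟩
  rw [F11_eq_coeffSum, coeff_coeffSum]
  refine sum_pos' (fun n _ => coeff_X_pow_mul_inv_one_sub_X_pow_nonneg (by omega) n m)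
    ⟨m, self_mem_range_succ m, ?_⟩
  simp [coeff_X_pow_mul']
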